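/- For 1 ≤ i ≤ n, the subspace G = K∂ᵢ + u_{n,i+1} is a Lie subalgebra of u_n, and its derived length equals n − i + 1. -/

import Mathlib

open MvPolynomial

noncomputable section

/-- The polynomial algebra `Pₙ = K[x₀,…,x_{n-1}]`. -/
abbrev Pn (K : Type) [Field K] (n : ℕ) : Type := MvPolynomial (Fin n) K

/-- The Lie algebra of `K`-derivations of `Pₙ`. -/
abbrev DerPn (K : Type) [Field K] (n : ℕ) : Type :=
  Derivation K (Pn K n) (Pn K n)

/-- The subalgebra `P_j = K[x₀,…,x_{j-1}]` of `Pₙ` (0-indexed: variables with index `< j`). -/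
def Psub (K : Type) [Field K] (n j : ℕ) : Subalgebra K (Pn K n) :=
  MvPolynomial.supported K {k : Fin n | (k : ℕ) < j}

/-- The subspace `u_{n,i} = Σ_{j=i}^n P_{j-1}∂_j` (1-indexed `i`; `U K n 1 = u_n`).
A derivation `D` lies in it iff `D(x_j) ∈ P_{j-1}` for all `j` and `D(x_j) = 0` for `j < i`
(0-indexed: `D (X j) = 0` when `(j:ℕ)+1 < i`). -/
def U (K : Type) [Field K] (n i : ℕ) : Submodule K (DerPn K n) where
  carrier := {D | ∀ j : Fin n, D (X j) ∈ Psub K n j ∧ ((j : ℕ) + 1 < i → D (X j) = 0)}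
  add_mem' := by
    intro a b ha hb j
    refine ⟨?_, fun h => ?_⟩
    · simpa using Subalgebra.add_mem _ (ha j).1 (hb j).1
    · simp [(ha j).2 h, (hb j).2 h]
  zero_mem' := by
    intro j
    refine ⟨by simpa using (Psub K n j).zero_mem, fun _ => rfl⟩
  smul_mem' := by
    intro c a ha j
    refine ⟨?_, fun h => ?_⟩
    · simpa using Subalgebra.smul_mem _ (ha j).1 c
    · simp [(ha j).2 h]

/-- The span of all brackets `⁅a,b⁆` with `a ∈ A`, `b ∈ B`. -/
def lieSpan (K : Type) [Field K] (n : ℕ) (A B : Submodule K (DerPn K n)) :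
    Submodule K (DerPn K n) :=
  Submodule.span K {x | ∃ a ∈ A, ∃ b ∈ B, x = ⁅a, b⁆}

/-- The derived series of a subspace `G`: `G_{(0)} = G`, `G_{(i+1)} = [G_{(i)}, G_{(i)}]`. -/
def derivedSub (K : Type) [Field K] (n : ℕ) (G : Submodule K (DerPn K n)) : ℕ → Submodule K (DerPn K n)
  | 0 => G
  | i + 1 => lieSpan K n (derivedSub K n G i) (derivedSub K n G i)

/-! Brackets raise the filtration by the subspaces `U K n k`: `⁅U k, U k⁆ ⊆ U (k + 1)`, because a
derivation in `U k` maps each `P_j` into itself and kills `P_j` for `j < k`. As `G ⊆ U i`, the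
`m`-th derived term of `G` lies in `U (i + m)`, which is zero once `i + m > n`. Conversely, with
`a = i - 1`, bracketing with `∂_{a+m}` strips the first variable off `x_{a+m} ⋯ x_{k-1} ∂_k`, so
these derivations lie in the `m`-th derived term; for `m = n - i` and `k = n - 1` this is
`∂_{n-1} ≠ 0`. -/

theorem Derivation.map_mem_adjoin {R A : Type*} [CommSemiring R] [CommSemiring A] [Algebra R A]
    (D : Derivation R A A) {s : Set A} (h : ∀ x ∈ s, D x ∈ Algebra.adjoin R s) {a : A}
    (ha : a ∈ Algebra.adjoin R s) : D a ∈ Algebra.adjoin R s := by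
  induction ha using Algebra.adjoin_induction with
  | mem x hx => exact h x hx
  | algebraMap r => simp
  | add x y _ _ hx hy => simpa using add_mem hx hy
  | mul x y hx' hy' hx hy =>
    rw [Derivation.leibniz, smul_eq_mul, smul_eq_mul]
    exact add_mem (mul_mem hx' hy) (mul_mem hy' hx)

theorem MvPolynomial.derivation_map_mem_supported {R σ : Type*} [CommSemiring R] {s : Set σ}
    (D : Derivation R (MvPolynomial σ R) (MvPolynomial σ R))
    (h : ∀ k ∈ s, D (X k) ∈ supported R s) {p : MvPolynomial σ R} (hp : p ∈ supported R s) :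
    D p ∈ supported R s := by
  rw [supported_eq_adjoin_X] at h hp ⊢
  exact D.map_mem_adjoin (Set.forall_mem_image.2 h) hp

section Unitriangular

variable {K : Type} [Field K] {n : ℕ}

theorem Psub_mono {a b : ℕ} (h : a ≤ b) : Psub K n a ≤ Psub K n b :=
  supported_mono fun _ hk => hk.trans_le h

theorem derivation_map_mem_Psub (D : DerPn K n) {j : ℕ}
    (h : ∀ k : Fin n, (k : ℕ) < j → D (X k) ∈ Psub K n j) {p : Pn K n} (hp : p ∈ Psub K n j) :
    D p ∈ Psub K n j :=
  derivation_map_mem_supported D h hp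

theorem derivation_eq_zero_of_mem_Psub (D : DerPn K n) {j : ℕ}
    (h : ∀ k : Fin n, (k : ℕ) < j → D (X k) = 0) {p : Pn K n} (hp : p ∈ Psub K n j) :
    D p = 0 :=
  derivation_eqOn_supported (D₂ := 0) h hp

theorem U_antitone : Antitone (U K n) := fun _ _ hab _ hD j =>
  ⟨(hD j).1, fun hj => (hD j).2 (by omega)⟩

theorem U_eq_bot {i : ℕ} (hi : n < i) : U K n i = ⊥ := by
  refine eq_bot_iff.2 fun D hD => (Submodule.mem_bot K).2 ?_
  exact derivation_ext fun j => (hD j).2 (by omega)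

theorem lie_mem_U {i : ℕ} {D E : DerPn K n} (hD : D ∈ U K n i) (hE : E ∈ U K n i) :
    ⁅D, E⁆ ∈ U K n (i + 1) := by
  intro j
  rw [Derivation.commutator_apply]
  refine ⟨sub_mem ?_ ?_, fun hj => ?_⟩
  · exact derivation_map_mem_Psub D (fun m _ => Psub_mono (by omega) (hD m).1) (hE j).1
  · exact derivation_map_mem_Psub E (fun m _ => Psub_mono (by omega) (hE m).1) (hD j).1
  · rw [derivation_eq_zero_of_mem_Psub D (fun m _ => (hD m).2 (by omega)) (hE j).1,
      derivation_eq_zero_of_mem_Psub E (fun m _ => (hE m).2 (by omega)) (hD j).1, sub_zero]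

theorem pderiv_mem_U {i : ℕ} (k : Fin n) (hi : i ≤ (k : ℕ) + 1) :
    (pderiv k : DerPn K n) ∈ U K n i := by
  intro j
  by_cases hj : j = k
  · subst hj
    exact ⟨by simp [one_mem], fun _ => by omega⟩
  · simp [pderiv_X_of_ne hj, zero_mem]

theorem pderiv_ne_zero (k : Fin n) : (pderiv k : DerPn K n) ≠ 0 := fun h => by
  simpa using congr($h (X k))

theorem lieSpan_le {A B C : Submodule K (DerPn K n)} :
    lieSpan K n A B ≤ C ↔ ∀ a ∈ A, ∀ b ∈ B, ⁅a, b⁆ ∈ C := by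
  rw [lieSpan, Submodule.span_le]
  constructor
  · exact fun h a ha b hb => h ⟨a, ha, b, hb, rfl⟩
  · rintro h _ ⟨a, ha, b, hb, rfl⟩
    exact h a ha b hb

theorem lie_mem_derivedSub_succ {G : Submodule K (DerPn K n)} {m : ℕ} {a b : DerPn K n}
    (ha : a ∈ derivedSub K n G m) (hb : b ∈ derivedSub K n G m) :
    ⁅a, b⁆ ∈ derivedSub K n G (m + 1) :=
  Submodule.subset_span ⟨a, ha, b, hb, rfl⟩

theorem derivedSub_le_U {G : Submodule K (DerPn K n)} {i : ℕ} (hG : G ≤ U K n i) (m : ℕ) :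
    derivedSub K n G m ≤ U K n (i + m) := by
  induction m with
  | zero => exact hG
  | succ m ih => exact lieSpan_le.2 fun a ha b hb => lie_mem_U (ih ha) (ih hb)

def icoExponent (n a b : ℕ) : Fin n →₀ ℕ :=
  Finsupp.equivFunOnFinite.symm fun l => if a ≤ (l : ℕ) ∧ (l : ℕ) < b then 1 else 0

theorem icoExponent_apply {a b : ℕ} (l : Fin n) :
    icoExponent n a b l = if a ≤ (l : ℕ) ∧ (l : ℕ) < b then 1 else 0 :=
  rfl

theorem icoExponent_of_le {a b : ℕ} (h : b ≤ a) : icoExponent n a b = 0 := by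
  ext l
  simp only [icoExponent_apply, Finsupp.coe_zero, Pi.zero_apply, ite_eq_right_iff]
  omega

theorem icoExponent_sub_single {a b : ℕ} (l : Fin n) (hl : (l : ℕ) = a) (hab : a < b) :
    icoExponent n a b - Finsupp.single l 1 = icoExponent n (a + 1) b := by
  ext l'
  rw [Finsupp.tsub_apply, icoExponent_apply, icoExponent_apply, Finsupp.single_apply]
  by_cases h : l = l'
  · subst h
    simp [hl, hab]
  · have : (l' : ℕ) ≠ a := fun h' => h (Fin.ext (by omega))
    rw [if_neg h, Nat.sub_zero]
    exact if_congr (by omega) rfl rfl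

theorem monomial_icoExponent_mem_Psub {a b : ℕ} :
    (monomial (icoExponent n a b) (1 : K) : Pn K n) ∈ Psub K n b := by
  rw [Psub, mem_supported, vars_monomial one_ne_zero]
  intro l hl
  simp only [Finset.mem_coe, Finsupp.mem_support_iff, icoExponent_apply] at hl
  by_contra h
  exact hl (if_neg (by simp_all))

/-- The derivation `x_a x_{a+1} ⋯ x_{k-1} ∂_k`. -/
def monomialPderiv (K : Type) [Field K] (n a : ℕ) (k : Fin n) : DerPn K n :=
  monomial (icoExponent n a k) (1 : K) • pderiv k

theorem monomialPderiv_apply {a : ℕ} {k : Fin n} (p : Pn K n) :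
    monomialPderiv K n a k p = monomial (icoExponent n a k) 1 * pderiv k p :=
  rfl

theorem monomialPderiv_of_le {a : ℕ} {k : Fin n} (h : (k : ℕ) ≤ a) :
    monomialPderiv K n a k = pderiv k := by
  rw [monomialPderiv, icoExponent_of_le h, monomial_zero', C_1, one_smul]

theorem monomialPderiv_mem_U {a i : ℕ} {k : Fin n} (hi : i ≤ (k : ℕ) + 1) :
    monomialPderiv K n a k ∈ U K n i := by
  intro j
  by_cases hj : j = k
  · subst hj
    refine ⟨?_, fun _ => by omega⟩
    simpa [monomialPderiv_apply] using monomial_icoExponent_mem_Psub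
  · simp [monomialPderiv_apply, pderiv_X_of_ne hj, zero_mem]

theorem pderiv_lie_monomialPderiv (j k : Fin n) (hjk : (j : ℕ) < k) :
    ⁅(pderiv j : DerPn K n), monomialPderiv K n j k⁆ = monomialPderiv K n (j + 1) k := by
  have hkj : k ≠ j := fun h => by subst h; omega
  apply derivation_ext
  intro l
  rw [Derivation.commutator_apply, monomialPderiv_apply, monomialPderiv_apply,
    monomialPderiv_apply]
  by_cases hl : l = k
  · subst hl
    have hexp : icoExponent n j l j = 1 := by simp [icoExponent_apply, hjk]
    simp [pderiv_X_of_ne hkj, pderiv_monomial, icoExponent_sub_single j rfl hjk, hexp]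
  · by_cases hlj : l = j
    · subst hlj
      simp [pderiv_X_of_ne hl]
    · simp [pderiv_X_of_ne hl, pderiv_X_of_ne hlj]

theorem monomialPderiv_mem_derivedSub {G : Submodule K (DerPn K n)} {a : Fin n}
    (ha : pderiv a ∈ G) (hG : U K n (a + 2) ≤ G) (m : ℕ) (k : Fin n) (hk : (a : ℕ) + m ≤ k) :
    monomialPderiv K n (a + m) k ∈ derivedSub K n G m := by
  induction m generalizing k with
  | zero =>
    by_cases hka : k = a
    · subst hka
      rwa [derivedSub, Nat.add_zero, monomialPderiv_of_le le_rfl]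
    · exact hG (monomialPderiv_mem_U (by have := Fin.val_ne_of_ne hka; omega))
  | succ m ih =>
    let j : Fin n := ⟨a + m, by omega⟩
    have hj : (pderiv j : DerPn K n) ∈ derivedSub K n G m := by
      simpa only [monomialPderiv_of_le (show (j : ℕ) ≤ a + m from le_rfl)] using ih j le_rfl
    have hlie := lie_mem_derivedSub_succ hj (ih k (by omega))
    rwa [pderiv_lie_monomialPderiv j k (show a + m < (k : ℕ) by omega)] at hlie

theorem derivedSub_ne_bot {G : Submodule K (DerPn K n)} {a : Fin n}
    (ha : pderiv a ∈ G) (hG : U K n (a + 2) ≤ G) : derivedSub K n G (n - 1 - a) ≠ ⊥ := by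
  intro hbot
  have := a.isLt
  have hlast := monomialPderiv_mem_derivedSub ha hG (n - 1 - a) ⟨n - 1, by omega⟩
    (show a + (n - 1 - a) ≤ n - 1 by omega)
  rw [monomialPderiv_of_le (show n - 1 ≤ a + (n - 1 - a) by omega), hbot,
    Submodule.mem_bot] at hlast
  exact pderiv_ne_zero _ hlast

end Unitriangular

theorem G_subalgebra_derived_length_general (K : Type) [Field K] (n : ℕ)
    (i : ℕ) (h1 : 1 ≤ i) (idx : Fin n) (hidx : (idx : ℕ) = i - 1) :
    (Submodule.span K {pderiv idx} ⊔ U K n (i + 1) ≤ U K n 1) ∧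
    (∀ a ∈ Submodule.span K {pderiv idx} ⊔ U K n (i + 1),
      ∀ b ∈ Submodule.span K {pderiv idx} ⊔ U K n (i + 1),
        ⁅a, b⁆ ∈ Submodule.span K {pderiv idx} ⊔ U K n (i + 1)) ∧
    derivedSub K n (Submodule.span K {pderiv idx} ⊔ U K n (i + 1)) (n - i + 1) = ⊥ ∧
    derivedSub K n (Submodule.span K {pderiv idx} ⊔ U K n (i + 1)) (n - i) ≠ ⊥ := by
  have hpderiv : pderiv idx ∈ Submodule.span K {pderiv idx} ⊔ U K n (i + 1) :=
    Submodule.mem_sup_left (Submodule.mem_span_singleton_self _)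
  have hGU : Submodule.span K {pderiv idx} ⊔ U K n (i + 1) ≤ U K n i :=
    sup_le ((Submodule.span_singleton_le_iff_mem _ _).2 (pderiv_mem_U idx (by omega)))
      (U_antitone (by omega))
  refine ⟨hGU.trans (U_antitone h1),
    fun a ha b hb => Submodule.mem_sup_right (lie_mem_U (hGU ha) (hGU hb)), ?_, ?_⟩
  · exact eq_bot_iff.2 ((derivedSub_le_U hGU _).trans_eq (U_eq_bot (by omega)))
  · convert derivedSub_ne_bot hpderiv (le_sup_of_le_right (U_antitone (by omega))) using 2
    omega

/-- `G = K∂ᵢ + u_{n,i+1}` is a Lie subalgebra of `u_n`, of derived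
length exactly `n - i + 1`. -/
theorem G_subalgebra_derived_length (K : Type) [Field K] [CharZero K] (n : ℕ) (hn : 2 ≤ n)
    (i : ℕ) (h1 : 1 ≤ i) (h2 : i ≤ n) (idx : Fin n) (hidx : (idx : ℕ) = i - 1) :
    (Submodule.span K {pderiv idx} ⊔ U K n (i + 1) ≤ U K n 1) ∧
    (∀ a ∈ Submodule.span K {pderiv idx} ⊔ U K n (i + 1),
      ∀ b ∈ Submodule.span K {pderiv idx} ⊔ U K n (i + 1),
        ⁅a, b⁆ ∈ Submodule.span K {pderiv idx} ⊔ U K n (i + 1)) ∧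
    derivedSub K n (Submodule.span K {pderiv idx} ⊔ U K n (i + 1)) (n - i + 1) = ⊥ ∧
    derivedSub K n (Submodule.span K {pderiv idx} ⊔ U K n (i + 1)) (n - i) ≠ ⊥ :=
  G_subalgebra_derived_length_general K n i h1 idx hidx
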